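/- arXiv:1504.03298 — 2 statements merged into one kernel-verified Lean document; each statement's English description precedes it below -/
import Mathlib

section
/- Let A be a unital C*-algebra, let 0 < ε < 2/3, and let u, ū, v be unitaries in A with ‖u − ū‖ ≤ ε and ‖[u, v]‖ ≤ ε. Then there exists a continuous path of unitaries (u_t)_{t∈[0,1]} in A with u_0 = u, u_1 = ū, and ‖[u_t, v]‖ ≤ 3ε for all t ∈ [0,1]. -/
open NormedSpace

lemma aux_abs_exp_sq (c : ℝ) :
    ‖Complex.exp (c * Complex.I) - 1‖ ^ 2 = 2 - 2 * Real.cos c := by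
  rw [Complex.sq_norm, Complex.normSq_apply]
  simp only [Complex.sub_re, Complex.sub_im, Complex.exp_ofReal_mul_I_re,
    Complex.exp_ofReal_mul_I_im, Complex.one_re, Complex.one_im]
  nlinarith [Real.sin_sq_add_cos_sq c]

lemma aux_key (z : ℂ) (hz1 : ‖z‖ = 1) (t : ℝ) (ht0 : 0 ≤ t) (ht1 : t ≤ 1) :
    ‖Complex.exp ((t : ℂ) * Complex.log z) - 1‖ ≤ ‖z - 1‖ := by
  have hz0 : z ≠ 0 := by
    intro h; rw [h] at hz1; simp at hz1
  have hns : z.re ^ 2 + z.im ^ 2 = 1 := by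
    have := Complex.sq_norm z
    rw [hz1] at this
    rw [Complex.normSq_apply] at this
    nlinarith
  have hlog : (t : ℂ) * Complex.log z = ((t * Complex.arg z : ℝ) : ℂ) * Complex.I := by
    have h1 : Complex.log z = ((Complex.arg z : ℝ) : ℂ) * Complex.I := by
      apply Complex.ext
      · simp [Complex.log_re, hz1]
      · simp [Complex.log_im]
    rw [h1]; push_cast; ring
  have h1 : ‖Complex.exp ((t : ℂ) * Complex.log z) - 1‖ ^ 2
      = 2 - 2 * Real.cos (t * Complex.arg z) := by
    rw [hlog, aux_abs_exp_sq]
  have h2 : ‖z - 1‖ ^ 2 = 2 - 2 * Real.cos (Complex.arg z) := by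
    rw [Complex.sq_norm, Complex.normSq_apply]
    have := Complex.cos_arg hz0
    rw [hz1, div_one] at this
    simp only [Complex.sub_re, Complex.sub_im, Complex.one_re, Complex.one_im]
    nlinarith
  have hcos : Real.cos (Complex.arg z) ≤ Real.cos (t * Complex.arg z) := by
    have h3 : |t * Complex.arg z| ≤ |Complex.arg z| := by
      rw [abs_mul]
      calc |t| * |Complex.arg z| ≤ 1 * |Complex.arg z| := by
            apply mul_le_mul_of_nonneg_right _ (abs_nonneg _)
            rw [abs_of_nonneg ht0]; exact ht1
        _ = |Complex.arg z| := one_mul _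
    have h4 : |Complex.arg z| ≤ Real.pi :=
      abs_le.mpr ⟨(Complex.neg_pi_lt_arg z).le, Complex.arg_le_pi z⟩
    have := Real.cos_le_cos_of_nonneg_of_le_pi (abs_nonneg (t * Complex.arg z)) h4 h3
    rwa [Real.cos_abs, Real.cos_abs] at this
  nlinarith [norm_nonneg (Complex.exp ((t : ℂ) * Complex.log z) - 1),
    norm_nonneg (z - 1)]

/-- Let `A` be a unital C*-algebra, `0 < ε < 2/3`, and `u, ū, v` unitaries in `A`
with `‖u - ū‖ ≤ ε` and `‖[u, v]‖ ≤ ε`.  Then there is a continuous path of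
unitaries `(u_t)_{t ∈ [0,1]}` in `A` with `u_0 = u`, `u_1 = ū` and
`‖[u_t, v]‖ ≤ 3ε` for all `t ∈ [0,1]`. -/
theorem stmt_0 {A : Type*} [NormedRing A] [StarRing A] [CStarRing A]
    [NormedAlgebra ℂ A] [CompleteSpace A] [StarModule ℂ A]
    (ε : ℝ) (hε₀ : 0 < ε) (hε : ε < 2 / 3)
    (u ubar v : A) (hu : u ∈ unitary A) (hubar : ubar ∈ unitary A)
    (hv : v ∈ unitary A)
    (hdist : ‖u - ubar‖ ≤ ε) (hcomm : ‖u * v - v * u‖ ≤ ε) :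
    ∃ w : ℝ → A, ContinuousOn w (Set.Icc 0 1) ∧ w 0 = u ∧ w 1 = ubar ∧
      ∀ t ∈ Set.Icc (0 : ℝ) 1, w t ∈ unitary A ∧ ‖w t * v - v * w t‖ ≤ 3 * ε := by
  letI : CStarAlgebra A := ⟨⟩
  rcases subsingleton_or_nontrivial A with hA | hA
  · refine ⟨fun _ => u, continuousOn_const, rfl, Subsingleton.elim _ _, fun t ht => ⟨hu, ?_⟩⟩
    rw [Subsingleton.elim (u * v - v * u) 0, norm_zero]
    positivity
  set a : A := star u * ubar with ha_def
  have ha : a ∈ unitary A := mul_mem (Unitary.star_mem hu) hubar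
  have hna : IsStarNormal a := isStarNormal_of_mem_unitary ha
  have hA1 : ‖a - 1‖ ≤ ε := by
    have : a - 1 = star u * (ubar - u) := by
      rw [mul_sub, ha_def, Unitary.star_mul_self_of_mem hu]
    rw [this, CStarRing.norm_mem_unitary_mul _ (Unitary.star_mem hu), ← neg_sub, norm_neg]
    exact hdist
  have hspec1 : ∀ z ∈ spectrum ℂ a, ‖z‖ = 1 := by
    intro z hz
    have hz' := spectrum_subset_unitary_of_mem_unitary ha hz
    have := Unitary.star_mul_self_of_mem hz'
    have h2 : Complex.normSq z = 1 := by
      have := congrArg Complex.re this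
      simpa [Complex.normSq_apply, Complex.mul_re] using this
    rw [Complex.norm_def, h2, Real.sqrt_one]
  have hspec2 : ∀ z ∈ spectrum ℂ a, ‖z - 1‖ ≤ ε := by
    intro z hz
    have hmem : z - 1 ∈ spectrum ℂ (a - algebraMap ℂ A 1) := by
      rw [← spectrum.sub_singleton_eq]
      exact Set.sub_mem_sub hz rfl
    rw [map_one] at hmem
    calc ‖z - 1‖ = ‖z - 1‖ := rfl
      _ ≤ ‖a - 1‖ := spectrum.norm_le_norm_of_mem hmem
      _ ≤ ε := hA1
  have hslit : ∀ z ∈ spectrum ℂ a, z ∈ Complex.slitPlane := by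
    intro z hz
    left
    have h1 := hspec1 z hz
    have h2 := hspec2 z hz
    have hsq : ‖z - 1‖ ^ 2 = 2 - 2 * z.re := by
      rw [Complex.sq_norm, Complex.normSq_apply]
      have hns : z.re ^ 2 + z.im ^ 2 = 1 := by
        have := Complex.sq_norm z
        rw [h1, Complex.normSq_apply] at this
        nlinarith
      simp only [Complex.sub_re, Complex.sub_im, Complex.one_re, Complex.one_im]
      nlinarith
    nlinarith [norm_nonneg (z - 1)]
  have hlogc : ContinuousOn Complex.log (spectrum ℂ a) := fun z hz =>
    (continuousAt_clog (hslit z hz)).continuousWithinAt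
  set b : A := cfc Complex.log a with hb_def
  -- the key cfc formula
  have hform : ∀ t : ℝ, exp ((t : ℂ) • b) =
      cfc (fun z => Complex.exp ((t : ℂ) * Complex.log z)) a := by
    intro t
    have hg : ContinuousOn (fun z => (t : ℂ) * Complex.log z) (spectrum ℂ a) :=
      continuousOn_const.mul hlogc
    have h1 : (t : ℂ) • b = cfc (fun z => (t : ℂ) * Complex.log z) a := by
      rw [hb_def, ← cfc_const_mul ((t : ℂ)) Complex.log a hlogc]
    have h2 : IsStarNormal ((t : ℂ) • b) := by
      rw [h1]; exact cfc_predicate _ a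
    rw [h1, ← CFC.complex_exp_eq_normedSpace_exp (cfc_predicate _ a),
      ← cfc_comp Complex.exp (fun z => (t : ℂ) * Complex.log z) a hna
        Complex.continuous_exp.continuousOn hg]
    rfl
  refine ⟨fun t => u * exp ((t : ℂ) • b), ?_, ?_, ?_, ?_⟩
  · apply Continuous.continuousOn
    letI : NormedAlgebra ℚ A := NormedAlgebra.restrictScalars ℚ ℂ A
    exact continuous_const.mul (exp_continuous.comp (Complex.continuous_ofReal.smul continuous_const))
  · simp
  · show u * exp (((1 : ℝ) : ℂ) • b) = ubar
    rw [hform 1]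
    have : cfc (fun z => Complex.exp (((1 : ℝ) : ℂ) * Complex.log z)) a = cfc (id : ℂ → ℂ) a := by
      apply cfc_congr
      intro z hz
      have h1 := hspec1 z hz
      have hz0 : z ≠ 0 := by intro h; rw [h] at h1; simp at h1
      simp [Complex.exp_log hz0]
    rw [this, cfc_id ℂ a, ha_def, ← mul_assoc, Unitary.mul_star_self_of_mem hu, one_mul]
  · intro t ht
    obtain ⟨ht0, ht1⟩ := ht
    set ft : ℂ → ℂ := fun z => Complex.exp ((t : ℂ) * Complex.log z) with hft
    have hftc : ContinuousOn ft (spectrum ℂ a) :=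
      Complex.continuous_exp.comp_continuousOn (continuousOn_const.mul hlogc)
    have hmem : cfc ft a ∈ unitary A := by
      rw [cfc_unitary_iff ft a hna hftc]
      intro z hz
      have h1 := hspec1 z hz
      have hre : ((t : ℂ) * Complex.log z).re = 0 := by
        simp [Complex.mul_re, Complex.log_re, h1]
      rw [hft, RCLike.star_def, ← Complex.exp_conj, ← Complex.exp_add]
      have : (starRingEnd ℂ) ((t : ℂ) * Complex.log z) + (t : ℂ) * Complex.log z = 0 := by
        rw [add_comm, Complex.add_conj, hre]
        simp
      rw [this, Complex.exp_zero]
    have humem : u * exp ((t : ℂ) • b) ∈ unitary A := by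
      rw [hform t]; exact mul_mem hu hmem
    refine ⟨humem, ?_⟩
    have hclose : ‖u * exp ((t : ℂ) • b) - u‖ ≤ ε := by
      have : u * exp ((t : ℂ) • b) - u = u * (cfc ft a - 1) := by
        rw [mul_sub, mul_one, hform t]
      rw [this, CStarRing.norm_mem_unitary_mul _ hu]
      have : cfc ft a - 1 = cfc (fun z => ft z - 1) a := by
        rw [cfc_sub ft (fun _ => 1) a hftc continuousOn_const, cfc_const 1 a hna, map_one]
      rw [this]
      apply norm_cfc_le hε₀.le
      intro z hz
      calc ‖ft z - 1‖ = ‖Complex.exp ((t : ℂ) * Complex.log z) - 1‖ := rfl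
        _ ≤ ‖z - 1‖ := aux_key z (hspec1 z hz) t ht0 ht1
        _ ≤ ε := hspec2 z hz
    set wt := u * exp ((t : ℂ) • b) with hwt
    have hv1 : ‖v‖ = 1 := CStarRing.norm_of_mem_unitary hv
    have hdecomp : wt * v - v * wt = (u * v - v * u) + ((wt - u) * v - v * (wt - u)) := by
      noncomm_ring
    calc ‖wt * v - v * wt‖
        ≤ ‖u * v - v * u‖ + ‖(wt - u) * v - v * (wt - u)‖ := by rw [hdecomp]; exact norm_add_le _ _
      _ ≤ ε + (‖(wt - u) * v‖ + ‖v * (wt - u)‖) := by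
          gcongr
          exact norm_sub_le _ _
      _ ≤ ε + (‖wt - u‖ * ‖v‖ + ‖v‖ * ‖wt - u‖) := by gcongr <;> exact norm_mul_le _ _
      _ ≤ ε + (ε * 1 + 1 * ε) := by rw [hv1]; gcongr
      _ = 3 * ε := by ring
end

section
/- Let B be a unital C*-algebra, let u, v ∈ B be unitaries, and let f, g, h ∈ C(𝕋) be the Loring functions (with 0 ≤ f ≤ 1, g·h = 0 and g² + h² = f − f²). Define e(u,v) ∈ M₂(B) as the 2×2 matrix with entries e₁₁ = f(v), e₁₂ = g(v) + h(v)u, e₂₁ = g(v) + u*h(v), e₂₂ = 1 − f(v). Then e(u,v) is self-adjoint, and if u and v commute, then e(u,v) is a projection, i.e. e(u,v)² = e(u,v). -/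
/-- The canonical inclusion of the circle into `ℂ`, as a continuous map. -/
def circleIncl : C(Circle, ℂ) := ⟨fun x => (x : ℂ), by fun_prop⟩

/-- A real-valued continuous function on the circle, viewed as complex-valued. -/
noncomputable def toComplexCM (f : C(Circle, ℝ)) : C(Circle, ℂ) := ⟨fun x => (f x : ℂ), by fun_prop⟩

lemma toComplexCM_star (k : C(Circle, ℝ)) : star (toComplexCM k) = toComplexCM k := by
  ext x
  exact Complex.conj_ofReal _

lemma toComplexCM_mul (k l : C(Circle, ℝ)) :
    toComplexCM (k * l) = toComplexCM k * toComplexCM l := by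
  ext x
  simp only [toComplexCM, ContinuousMap.coe_mk, ContinuousMap.mul_apply]
  push_cast
  ring

lemma toComplexCM_add (k l : C(Circle, ℝ)) :
    toComplexCM (k + l) = toComplexCM k + toComplexCM l := by
  ext x
  simp only [toComplexCM, ContinuousMap.coe_mk, ContinuousMap.add_apply]
  push_cast
  ring

lemma toComplexCM_zero : toComplexCM 0 = 0 := by
  ext x; simp [toComplexCM]

/-- The commutant of a unitary, as a star subalgebra. -/
def commutantStar {B : Type*} [NormedRing B] [StarRing B] [CStarRing B]
    [NormedAlgebra ℂ B] [StarModule ℂ B] (u : B) (hu : u ∈ unitary B) :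
    StarSubalgebra ℂ B where
  carrier := {b | u * b = b * u}
  mul_mem' := by
    intro a b (ha : u * a = a * u) (hb : u * b = b * u)
    show u * (a * b) = a * b * u
    rw [← mul_assoc, ha, mul_assoc, hb, mul_assoc]
  add_mem' := by
    intro a b (ha : u * a = a * u) (hb : u * b = b * u)
    show u * (a + b) = (a + b) * u
    rw [mul_add, add_mul, ha, hb]
  algebraMap_mem' := fun c => (Algebra.commutes c u).symm
  star_mem' := by
    intro b (hb : u * b = b * u)
    show u * star b = star b * u
    have h1 : star u * star b = star b * star u := by
      have := congrArg star hb
      simpa [star_mul] using this.symm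
    calc u * star b = u * star b * (star u * u) := by
          rw [(Unitary.mem_iff.mp hu).1, mul_one]
      _ = u * (star b * star u) * u := by noncomm_ring
      _ = u * (star u * star b) * u := by rw [h1]
      _ = (u * star u) * (star b * u) := by noncomm_ring
      _ = star b * u := by rw [(Unitary.mem_iff.mp hu).2, one_mul]

lemma starAlgHom_continuous_aux {B : Type*} [NormedRing B] [StarRing B] [CStarRing B]
    [NormedAlgebra ℂ B] [CompleteSpace B] [StarModule ℂ B]
    (Φ : C(Circle, ℂ) →⋆ₐ[ℂ] B) : Continuous Φ := by
  letI : CStarAlgebra B := {}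
  exact AddMonoidHomClass.continuous_of_bound Φ 1
    (fun a => by simpa using NonUnitalStarAlgHom.norm_apply_le Φ a)

/-- Let `B` be a unital C*-algebra, `u, v ∈ B` unitaries, and `f, g, h ∈ C(𝕋)` the
Loring functions (real-valued, with `0 ≤ f ≤ 1`, `g·h = 0`, `g² + h² = f - f²`).
Applying continuous functional calculus for `v` (encoded by a unital
*-homomorphism `Φ : C(𝕋) → B` with `Φ(z) = v`), form the `2×2` matrix
`e(u,v) = (f(v), g(v)+h(v)u; g(v)+u*h(v), 1-f(v))`.  Then `e(u,v)` is
self-adjoint, and if `u` and `v` commute, `e(u,v)` is a projection. -/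
theorem stmt_9 {B : Type*} [NormedRing B] [StarRing B] [CStarRing B]
    [NormedAlgebra ℂ B] [CompleteSpace B] [StarModule ℂ B]
    (u v : B) (hu : u ∈ unitary B) (hv : v ∈ unitary B)
    (Φ : C(Circle, ℂ) →⋆ₐ[ℂ] B) (hΦ : Φ circleIncl = v)
    (f g h : C(Circle, ℝ))
    (hf : ∀ x, 0 ≤ f x ∧ f x ≤ 1)
    (hgh : g * h = 0)
    (hsum : g ^ 2 + h ^ 2 = f - f ^ 2) :
    IsSelfAdjoint
      (!![Φ (toComplexCM f), Φ (toComplexCM g) + Φ (toComplexCM h) * u;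
          Φ (toComplexCM g) + star u * Φ (toComplexCM h), 1 - Φ (toComplexCM f)]) ∧
    (u * v = v * u →
      !![Φ (toComplexCM f), Φ (toComplexCM g) + Φ (toComplexCM h) * u;
          Φ (toComplexCM g) + star u * Φ (toComplexCM h), 1 - Φ (toComplexCM f)] *
        !![Φ (toComplexCM f), Φ (toComplexCM g) + Φ (toComplexCM h) * u;
          Φ (toComplexCM g) + star u * Φ (toComplexCM h), 1 - Φ (toComplexCM f)] =
      !![Φ (toComplexCM f), Φ (toComplexCM g) + Φ (toComplexCM h) * u;
          Φ (toComplexCM g) + star u * Φ (toComplexCM h), 1 - Φ (toComplexCM f)]) := by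
  set F := Φ (toComplexCM f) with hF
  set G := Φ (toComplexCM g) with hG
  set H := Φ (toComplexCM h) with hH
  -- star facts
  have hFs : star F = F := by rw [hF, ← map_star, toComplexCM_star]
  have hGs : star G = G := by rw [hG, ← map_star, toComplexCM_star]
  have hHs : star H = H := by rw [hH, ← map_star, toComplexCM_star]
  constructor
  · -- self-adjointness
    rw [IsSelfAdjoint, Matrix.star_eq_conjTranspose]
    ext i j
    fin_cases i <;> fin_cases j <;>
      simp [Matrix.conjTranspose_apply, hFs, hGs, hHs, star_mul, star_add, star_sub, star_one]
  · intro hc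
    -- commutation of u with the range of Φ
    have hΦcont : Continuous Φ := starAlgHom_continuous_aux Φ
    have hKclosed : IsClosed ((commutantStar u hu : StarSubalgebra ℂ B) : Set B) := by
      have : ((commutantStar u hu : StarSubalgebra ℂ B) : Set B)
          = (fun b => u * b - b * u) ⁻¹' {0} := by
        ext b
        simp [commutantStar, sub_eq_zero]
      rw [this]
      exact (isClosed_singleton).preimage (by fun_prop)
    have hmem : ∀ a : C(Circle, ℂ), u * Φ a = Φ a * u := by
      have hle : StarAlgebra.adjoin ℂ ({circleIncl} : Set C(Circle, ℂ)) ≤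
          (commutantStar u hu).comap Φ := by
        rw [StarAlgebra.adjoin_le_iff]
        intro a ha
        rw [Set.mem_singleton_iff] at ha
        subst ha
        show Φ circleIncl ∈ commutantStar u hu
        rw [hΦ]
        exact hc
      have hclosed : IsClosed (((commutantStar u hu).comap Φ : StarSubalgebra ℂ C(Circle, ℂ)) :
          Set C(Circle, ℂ)) := hKclosed.preimage hΦcont
      have htop : (StarAlgebra.adjoin ℂ ({circleIncl} : Set C(Circle, ℂ))).topologicalClosure
          = ⊤ := by
        apply ContinuousMap.starSubalgebra_topologicalClosure_eq_top_of_separatesPoints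
        intro x y hxy
        refine ⟨_, ⟨circleIncl, ?_, rfl⟩, ?_⟩
        · exact StarAlgebra.subset_adjoin ℂ _ rfl
        · exact fun hcontra => hxy (Circle.coe_injective hcontra)
      intro a
      have : a ∈ (commutantStar u hu).comap Φ := by
        have := StarSubalgebra.topologicalClosure_minimal hle hclosed
        rw [htop] at this
        exact this (by trivial)
      exact this
    -- the key commutation relations
    have huF : u * F = F * u := hmem _
    have huG : u * G = G * u := hmem _
    have huH : u * H = H * u := hmem _
    have huF' : star u * F = F * star u := by
      have := congrArg star huF
      simpa [star_mul, hFs] using this.symm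
    have huG' : star u * G = G * star u := by
      have := congrArg star huG
      simpa [star_mul, hGs] using this.symm
    have huH' : star u * H = H * star u := by
      have := congrArg star huH
      simpa [star_mul, hHs] using this.symm
    -- algebraic relations among F, G, H
    have hGH0 : G * H = 0 := by
      rw [hG, hH, ← map_mul, ← toComplexCM_mul, hgh, toComplexCM_zero, map_zero]
    have hsumB : G * G + H * H = F - F * F := by
      have : toComplexCM g * toComplexCM g + toComplexCM h * toComplexCM h
          = toComplexCM f - toComplexCM f * toComplexCM f := by
        ext x
        have hx := congrArg (fun k => k x) hsum
        simp only [ContinuousMap.add_apply, ContinuousMap.sub_apply, ContinuousMap.pow_apply] at hx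
        simp only [toComplexCM, ContinuousMap.add_apply, ContinuousMap.sub_apply,
          ContinuousMap.mul_apply, ContinuousMap.coe_mk]
        push_cast
        norm_cast
        linear_combination hx
      rw [hG, hH, hF, ← map_mul, ← map_mul, ← map_mul, ← map_add, ← map_sub, this]
    have hFG : F * G = G * F := by rw [hF, hG, ← map_mul, ← map_mul, mul_comm]
    have hFH : F * H = H * F := by rw [hF, hH, ← map_mul, ← map_mul, mul_comm]
    have hGHc : G * H = H * G := by rw [hG, hH, ← map_mul, ← map_mul, mul_comm]
    -- everything commutes: pass to a commutative subalgebra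
    let s : Set B := {F, G, H, u, star u}
    have hs : s = {F, G, H, u, star u} := rfl
    have hcomm : ∀ a ∈ s, ∀ b ∈ s, a * b = b * a := by
      have huu' : u * star u = star u * u := by
        rw [(Unitary.mem_iff.mp hu).2, (Unitary.mem_iff.mp hu).1]
      intro a ha b hb
      simp only [hs, Set.mem_insert_iff, Set.mem_singleton_iff] at ha hb
      rcases ha with rfl|rfl|rfl|rfl|rfl <;> rcases hb with rfl|rfl|rfl|rfl|rfl <;>
        first
          | rfl
          | assumption
          | (exact hFG.symm) | (exact hFH.symm) | (exact hGHc.symm)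
          | (exact huF.symm) | (exact huG.symm) | (exact huH.symm)
          | (exact huF'.symm) | (exact huG'.symm) | (exact huH'.symm)
          | (exact huu') | (exact huu'.symm)
    letI : CommRing (Algebra.adjoin ℂ s) := Algebra.adjoinCommRingOfComm ℂ hcomm
    let A := Algebra.adjoin ℂ s
    have hFm : F ∈ A := Algebra.subset_adjoin (by simp [hs])
    have hGm : G ∈ A := Algebra.subset_adjoin (by simp [hs])
    have hHm : H ∈ A := Algebra.subset_adjoin (by simp [hs])
    have hum : u ∈ A := Algebra.subset_adjoin (by simp [hs])
    have hwm : star u ∈ A := Algebra.subset_adjoin (by simp [hs])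
    set F' : A := ⟨F, hFm⟩
    set G' : A := ⟨G, hGm⟩
    set H' : A := ⟨H, hHm⟩
    set u' : A := ⟨u, hum⟩
    set w' : A := ⟨star u, hwm⟩
    have coe_mul : ∀ x y : A, ((x * y : A) : B) = (x : B) * (y : B) := fun _ _ => rfl
    have coe_add : ∀ x y : A, ((x + y : A) : B) = (x : B) + (y : B) := fun _ _ => rfl
    have coe_sub : ∀ x y : A, ((x - y : A) : B) = (x : B) - (y : B) := fun _ _ => rfl
    have coe_one : ((1 : A) : B) = 1 := rfl
    have coe_zero : ((0 : A) : B) = 0 := rfl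
    have hGH' : G' * H' = 0 := Subtype.ext (by rw [coe_mul, coe_zero]; exact hGH0)
    have hsum' : G' * G' + H' * H' = F' - F' * F' := Subtype.ext
      (by rw [coe_add, coe_mul, coe_mul, coe_sub, coe_mul]; exact hsumB)
    have huw' : u' * w' = 1 := Subtype.ext
      (by rw [coe_mul, coe_one]; exact (Unitary.mem_iff.mp hu).2)
    have hA11 : F' * F' + (G' + H' * u') * (G' + w' * H') = F' := by
      calc F' * F' + (G' + H' * u') * (G' + w' * H')
          = F' * F' + (G' * G' + H' * H') + (G' * H') * (u' + w')
            + (H' * H') * (u' * w' - 1) := by ring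
        _ = F' := by rw [hGH', huw', hsum']; ring
    have hA22 : (G' + w' * H') * (G' + H' * u') + (1 - F') * (1 - F') = 1 - F' := by
      calc (G' + w' * H') * (G' + H' * u') + (1 - F') * (1 - F')
          = (1 - F') * (1 - F') + (G' * G' + H' * H') + (G' * H') * (u' + w')
            + (H' * H') * (u' * w' - 1) := by ring
        _ = 1 - F' := by rw [hGH', huw', hsum']; ring
    have hA12 : F' * (G' + H' * u') + (G' + H' * u') * (1 - F') = G' + H' * u' := by ring
    have hA21 : (G' + w' * H') * F' + (1 - F') * (G' + w' * H') = G' + w' * H' := by ring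
    have e11 : F * F + (G + H * u) * (G + star u * H) = F := by
      have hcast := congrArg (Subtype.val) hA11
      simp only [coe_mul, coe_add, coe_sub, coe_one] at hcast
      exact hcast
    have e22 : (G + star u * H) * (G + H * u) + (1 - F) * (1 - F) = 1 - F := by
      have hcast := congrArg (Subtype.val) hA22
      simp only [coe_mul, coe_add, coe_sub, coe_one] at hcast
      exact hcast
    have e12 : F * (G + H * u) + (G + H * u) * (1 - F) = G + H * u := by
      have hcast := congrArg (Subtype.val) hA12
      simp only [coe_mul, coe_add, coe_sub, coe_one] at hcast
      exact hcast
    have e21 : (G + star u * H) * F + (1 - F) * (G + star u * H) = G + star u * H := by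
      have hcast := congrArg (Subtype.val) hA21
      simp only [coe_mul, coe_add, coe_sub, coe_one] at hcast
      exact hcast
    ext i j
    fin_cases i <;> fin_cases j <;>
      simp [Matrix.mul_apply, Fin.sum_univ_two, e11, e12, e21, e22]
end
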